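/- Let V_n be the (n+1)-dimensional irreducible U_q(sl_2)-module with dual standard basis v^i and let ι_n : V_n → V_1^{⊗n} be the map v_k ↦ Σ_{|a|=k} q^{b(a)} v_a where the sum is over 0-1 sequences a of length n with k ones, b(a) is the number of pairs (i,j) with i<j and a_i>a_j, and v_a = v_{a_1}⊗⋯⊗v_{a_n}. Then ι_n is a homomorphism of U_q(sl_2)-modules: ι_n(Ev) = Eι_n(v), ι_n(Fv) = Fι_n(v), ι_n(Kv) = Kι_n(v) for all v ∈ V_n. -/

import Mathlib

noncomputable section

open Finset

/-- The base field ℂ(q). -/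
abbrev Fq : Type := RatFunc ℂ

/-- The variable q. -/
def q : Fq := RatFunc.X

/-- Quantum integer [k] = ∑_{j=0}^{k-1} q^{k-2j-1}. -/
def qint (k : ℕ) : Fq := ∑ j ∈ Finset.range k, q ^ ((k : ℤ) - 2 * j - 1)

/-- Quantum factorial [k]!. -/
def qfact (k : ℕ) : Fq := ∏ j ∈ Finset.range k, qint (j + 1)

/-- Quantum binomial coefficient. -/
def qbinom (n k : ℕ) : Fq := qfact n / (qfact k * qfact (n - k))

/-- The n-th tensor power V₁^{⊗n} of the 2-dimensional simple module, modelled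
as coefficient functions on the standard basis {v_a : a ∈ {0,1}^n}. -/
abbrev V (n : ℕ) : Type := (Fin n → Fin 2) → Fq

/-- weight contribution of a single tensor factor -/
def wtc (a : Fin 2) : ℤ := 2 * (a : ℤ) - 1

/-- total weight of a basis vector -/
def wt {n : ℕ} (b : Fin n → Fin 2) : ℤ := ∑ i, wtc (b i)

/-- Action of E on V₁^{⊗n} via iterated comultiplication Δ(E)=1⊗E+E⊗K⁻¹. -/
def Eop {n : ℕ} (x : V n) : V n := fun b =>
  ∑ i : Fin n, if b i = 1 then
    q ^ (-(∑ j ∈ Finset.univ.filter (fun j => i < j), wtc (b j))) *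
      x (Function.update b i 0)
  else 0

/-- Action of F on V₁^{⊗n} via iterated comultiplication Δ(F)=K⊗F+F⊗1. -/
def Fop {n : ℕ} (x : V n) : V n := fun b =>
  ∑ i : Fin n, if b i = 0 then
    q ^ (∑ j ∈ Finset.univ.filter (fun j => j < i), wtc (b j)) *
      x (Function.update b i 1)
  else 0

/-- Action of K on V₁^{⊗n}. -/
def Kop {n : ℕ} (x : V n) : V n := fun b => q ^ (wt b) * x b

/-- Action of K⁻¹ on V₁^{⊗n}. -/
def Kinv {n : ℕ} (x : V n) : V n := fun b => q ^ (-(wt b)) * x b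

/-- Divided power E^{(k)} = E^k/[k]!. -/
def Ediv {n : ℕ} (k : ℕ) (x : V n) : V n := fun b => (qfact k)⁻¹ * (Eop^[k] x) b

/-- Divided power F^{(k)} = F^k/[k]!. -/
def Fdiv {n : ℕ} (k : ℕ) (x : V n) : V n := fun b => (qfact k)⁻¹ * (Fop^[k] x) b

/-- Projection 1_λ onto the q^λ-eigenspace of K. -/
def proj {n : ℕ} (lam : ℤ) (x : V n) : V n := fun b => if wt b = lam then x b else 0

/-- The operator p_{k,n} = E^{(k)}F^{(k)} / [n choose k]. -/
def pkn {n : ℕ} (k : ℕ) (x : V n) : V n := fun b => (qbinom n k)⁻¹ * Ediv k (Fdiv k x) b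

/-- The Jones-Wenzl projector p_n = ∑_k p_{k,n} 1_{-n+2k}. -/
def JW {n : ℕ} (x : V n) : V n :=
  ∑ k ∈ Finset.range (n + 1), pkn k (proj (-(n : ℤ) + 2 * k) x)


/-- The irreducible (n+1)-dimensional module V_n, modelled as coefficient functions on
the basis v₀, …, v_n. -/
abbrev Virr (n : ℕ) : Type := Fin (n + 1) → Fq

/-- E v_i = [i+1] v_{i+1}. -/
def EV {n : ℕ} (y : Virr n) : Virr n := fun j =>
  if h : 0 < (j : ℕ) then qint j * y ⟨(j : ℕ) - 1, lt_of_le_of_lt (Nat.pred_le _) j.2⟩ else 0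

/-- F v_i = [n-i+1] v_{i-1}. -/
def FV {n : ℕ} (y : Virr n) : Virr n := fun j =>
  if h : (j : ℕ) + 1 < n + 1 then qint (n - j) * y ⟨(j : ℕ) + 1, h⟩ else 0

/-- K v_i = q^{2i-n} v_i. -/
def KV {n : ℕ} (y : Virr n) : Virr n := fun j => q ^ (2 * (j : ℤ) - n) * y j

/-- b(a): the number of pairs (i,j) with i < j and a_i > a_j. -/
def binv {n : ℕ} (b : Fin n → Fin 2) : ℕ :=
  (Finset.univ.filter (fun p : Fin n × Fin n => p.1 < p.2 ∧ b p.2 < b p.1)).card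

/-- the number of ones in a 0-1 sequence -/
def ones {n : ℕ} (b : Fin n → Fin 2) : ℕ := (Finset.univ.filter (fun i => b i = 1)).card

/-- The inclusion ι_n : V_n → V₁^{⊗n}, v_k ↦ ∑_{|a|=k} q^{b(a)} v_a. -/
def iota {n : ℕ} (y : Virr n) : V n := fun b =>
  q ^ (binv b) * y ⟨ones b, Nat.lt_succ_of_le ((Finset.card_filter_le _ _).trans (by simp))⟩


/- ### Auxiliary lemmas ### -/

lemma q_ne : q ≠ 0 := RatFunc.X_ne_zero



lemma rank_sum {α : Type*} [LinearOrder α] (S : Finset α) (g : ℕ → Fq) :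
    ∑ i ∈ S, g ((S.filter (fun j => j < i)).card) = ∑ j ∈ Finset.range S.card, g j := by
  induction S using Finset.induction_on_max with
  | empty => simp
  | insert a S ha ih =>
    have haS : a ∉ S := fun h => lt_irrefl a (ha a h)
    rw [Finset.sum_insert haS, Finset.card_insert_of_notMem haS, Finset.sum_range_succ]
    have h1 : (insert a S).filter (fun j => j < a) = S := by
      ext x
      simp only [Finset.mem_filter, Finset.mem_insert]
      constructor
      · rintro ⟨h | h, hx⟩
        · exact absurd hx (by simp [h])
        · exact h
      · intro h; exact ⟨Or.inr h, ha x h⟩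
    have h2 : ∀ i ∈ S, (insert a S).filter (fun j => j < i) = S.filter (fun j => j < i) := by
      intro i hi
      rw [Finset.filter_insert, if_neg (fun h => absurd (h.trans (ha i hi)) (lt_irrefl a))]
    rw [Finset.sum_congr rfl (fun i hi => by rw [h2 i hi]), ih, h1, add_comm]

lemma qint_reflect (k : ℕ) : qint k = ∑ j ∈ Finset.range k, q ^ (2*(j:ℤ) - k + 1) := by
  rw [qint]
  rw [show (∑ j ∈ Finset.range k, q ^ ((k : ℤ) - 2 * j - 1))
      = ∑ j ∈ Finset.range k, q ^ (2*(((k - 1 - j : ℕ)):ℤ) - k + 1) from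
    Finset.sum_congr rfl fun j hj => by
      have hjk := Finset.mem_range.mp hj
      congr 1
      have : ((k - 1 - j : ℕ) : ℤ) = (k:ℤ) - 1 - j := by omega
      rw [this]; ring]
  exact Finset.sum_range_reflect (fun j => q ^ (2*(j:ℤ) - k + 1)) k

lemma key_sum_E {n : ℕ} (S : Finset (Fin n)) (c : ℤ) :
    ∑ i ∈ S, q ^ (c + 2*((S.filter (fun j => j < i)).card : ℤ) - S.card + 1)
      = q ^ c * qint S.card := by
  rw [rank_sum S (fun r => q ^ (c + 2*(r:ℤ) - S.card + 1)), qint_reflect, Finset.mul_sum]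
  exact Finset.sum_congr rfl fun j _ => by rw [← zpow_add₀ q_ne]; ring_nf

lemma key_sum_F {n : ℕ} (T : Finset (Fin n)) (c : ℤ) :
    ∑ i ∈ T, q ^ (c + T.card - 1 - 2*((T.filter (fun j => j < i)).card : ℤ))
      = q ^ c * qint T.card := by
  rw [rank_sum T (fun r => q ^ (c + T.card - 1 - 2*(r:ℤ))), qint, Finset.mul_sum]
  exact Finset.sum_congr rfl fun j _ => by rw [← zpow_add₀ q_ne]; ring_nf

lemma lt2 (x y : Fin 2) : x < y ↔ x = 0 ∧ y = 1 := by revert x y; decide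
lemma fin2 (x : Fin 2) : x = 0 ∨ x = 1 := by revert x; decide

lemma card_split {α} [Fintype α] (P Q : α → Prop) [DecidablePred P] [DecidablePred Q] :
    (univ.filter P).card = (univ.filter fun a => P a ∧ Q a).card
      + (univ.filter fun a => P a ∧ ¬ Q a).card := by
  rw [← filter_filter, ← filter_filter, card_filter_add_card_filter_not]

lemma binv_eq {n : ℕ} (b : Fin n → Fin 2) (i : Fin n) :
    binv b = (univ.filter fun p : Fin n × Fin n =>
        (p.1 < p.2 ∧ b p.2 < b p.1) ∧ ¬(p.1 = i ∨ p.2 = i)).card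
      + (if b i = 1 then (univ.filter fun j => b j = 0 ∧ i < j).card
         else (univ.filter fun j => b j = 1 ∧ j < i).card) := by
  rw [binv, card_split (fun p : Fin n × Fin n => p.1 < p.2 ∧ b p.2 < b p.1)
      (fun p => ¬(p.1 = i ∨ p.2 = i))]
  congr 1
  · rcases fin2 (b i) with hbi | hbi
    · rw [if_neg (by simp [hbi])]
      rw [show (univ.filter fun p : Fin n × Fin n =>
          (p.1 < p.2 ∧ b p.2 < b p.1) ∧ ¬¬(p.1 = i ∨ p.2 = i))
        = (univ.filter fun j => b j = 1 ∧ j < i).image (fun j => (j, i)) from ?_]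
      · rw [Finset.card_image_of_injective _ (fun a b h => (Prod.mk.injEq _ _ _ _ ▸ h).1)]
      · ext ⟨p1, p2⟩
        simp only [mem_filter, mem_univ, true_and, mem_image, not_not, Prod.mk.injEq]
        constructor
        · rintro ⟨⟨hlt, hinv⟩, hc | hc⟩
          · rw [lt2] at hinv
            exact absurd (hc ▸ hinv.2) (by simp [hbi])
          · subst hc
            rw [lt2] at hinv
            exact ⟨p1, ⟨hinv.2, hlt⟩, rfl, rfl⟩
        · rintro ⟨j, ⟨hj1, hj2⟩, rfl, rfl⟩
          exact ⟨⟨hj2, by rw [lt2]; exact ⟨hbi, hj1⟩⟩, Or.inr rfl⟩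
    · rw [if_pos hbi]
      rw [show (univ.filter fun p : Fin n × Fin n =>
          (p.1 < p.2 ∧ b p.2 < b p.1) ∧ ¬¬(p.1 = i ∨ p.2 = i))
        = (univ.filter fun j => b j = 0 ∧ i < j).image (fun j => (i, j)) from ?_]
      · rw [Finset.card_image_of_injective _ (fun a b h => (Prod.mk.injEq _ _ _ _ ▸ h).2)]
      · ext ⟨p1, p2⟩
        simp only [mem_filter, mem_univ, true_and, mem_image, not_not, Prod.mk.injEq]
        constructor
        · rintro ⟨⟨hlt, hinv⟩, hc | hc⟩
          · subst hc
            rw [lt2] at hinv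
            exact ⟨p2, ⟨hinv.1, hlt⟩, rfl, rfl⟩
          · rw [lt2] at hinv
            exact absurd (hc ▸ hinv.1) (by simp [hbi])
        · rintro ⟨j, ⟨hj1, hj2⟩, rfl, rfl⟩
          exact ⟨⟨hj2, by rw [lt2]; exact ⟨hj1, hbi⟩⟩, Or.inl rfl⟩

lemma ones_update0 {n : ℕ} (b : Fin n → Fin 2) (i : Fin n) (h : b i = 1) :
    ones (Function.update b i 0) + 1 = ones b := by
  have : (univ.filter fun j => Function.update b i 0 j = 1)
      = (univ.filter fun j => b j = 1).erase i := by
    ext j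
    simp only [mem_filter, mem_univ, true_and, mem_erase, Function.update_apply]
    rcases eq_or_ne j i with rfl | hne
    · simp
    · simp [hne]
  rw [ones, this, Finset.card_erase_of_mem (by simp [h]), ones]
  have : 0 < (univ.filter fun j => b j = 1).card := Finset.card_pos.mpr ⟨i, by simp [h]⟩
  omega

lemma ones_update1 {n : ℕ} (b : Fin n → Fin 2) (i : Fin n) (h : b i = 0) :
    ones (Function.update b i 1) = ones b + 1 := by
  have : (univ.filter fun j => Function.update b i 1 j = 1)
      = insert i (univ.filter fun j => b j = 1) := by
    ext j
    simp only [mem_filter, mem_univ, true_and, mem_insert, Function.update_apply]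
    rcases eq_or_ne j i with rfl | hne
    · simp
    · simp [hne]
  rw [ones, this, Finset.card_insert_of_notMem (by simp [h]), ones]

lemma notinv_update {n : ℕ} (b : Fin n → Fin 2) (i : Fin n) (c : Fin 2) :
    (univ.filter fun p : Fin n × Fin n =>
        (p.1 < p.2 ∧ Function.update b i c p.2 < Function.update b i c p.1)
          ∧ ¬(p.1 = i ∨ p.2 = i))
      = (univ.filter fun p : Fin n × Fin n =>
        (p.1 < p.2 ∧ b p.2 < b p.1) ∧ ¬(p.1 = i ∨ p.2 = i)) := by
  apply filter_congr
  rintro ⟨p1, p2⟩ _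
  simp only [not_or]
  constructor
  · rintro ⟨⟨h1, h2⟩, h3, h4⟩
    rw [Function.update_of_ne h3, Function.update_of_ne h4] at h2
    exact ⟨⟨h1, h2⟩, h3, h4⟩
  · rintro ⟨⟨h1, h2⟩, h3, h4⟩
    rw [← Function.update_of_ne h3 c b, ← Function.update_of_ne h4 c b] at h2
    exact ⟨⟨h1, h2⟩, h3, h4⟩

lemma binv_update0 {n : ℕ} (b : Fin n → Fin 2) (i : Fin n) (h : b i = 1) :
    (binv (Function.update b i 0) : ℤ)
      = (binv b : ℤ) - ((univ.filter fun j => b j = 0 ∧ i < j).card : ℤ)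
        + ((univ.filter fun j => b j = 1 ∧ j < i).card : ℤ) := by
  have e1 := binv_eq b i
  have e2 := binv_eq (Function.update b i 0) i
  rw [if_pos h] at e1
  rw [if_neg (by simp), notinv_update] at e2
  have e3 : (univ.filter fun j => Function.update b i 0 j = 1 ∧ j < i)
      = (univ.filter fun j => b j = 1 ∧ j < i) := by
    apply filter_congr
    intro j _
    rcases eq_or_ne j i with rfl | hne
    · simp
    · rw [Function.update_of_ne hne]
  rw [e3] at e2
  omega

lemma binv_update1 {n : ℕ} (b : Fin n → Fin 2) (i : Fin n) (h : b i = 0) :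
    (binv (Function.update b i 1) : ℤ)
      = (binv b : ℤ) - ((univ.filter fun j => b j = 1 ∧ j < i).card : ℤ)
        + ((univ.filter fun j => b j = 0 ∧ i < j).card : ℤ) := by
  have e1 := binv_eq b i
  have e2 := binv_eq (Function.update b i 1) i
  rw [if_neg (by simp [h])] at e1
  rw [if_pos (by simp), notinv_update] at e2
  have e3 : (univ.filter fun j => Function.update b i 1 j = 0 ∧ i < j)
      = (univ.filter fun j => b j = 0 ∧ i < j) := by
    apply filter_congr
    intro j _
    rcases eq_or_ne j i with rfl | hne
    · simp
    · rw [Function.update_of_ne hne]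
  rw [e3] at e2
  omega


lemma wtc_split {n : ℕ} (b : Fin n → Fin 2) (P : Fin n → Prop) [DecidablePred P] :
    ∑ j ∈ univ.filter P, wtc (b j)
      = ((univ.filter fun j => b j = 1 ∧ P j).card : ℤ)
        - ((univ.filter fun j => b j = 0 ∧ P j).card : ℤ) := by
  rw [Finset.sum_congr rfl (fun j _ => show wtc (b j) = if b j = 1 then (1:ℤ) else -1 from by
    rcases fin2 (b j) with h | h <;> simp [wtc, h])]
  rw [Finset.sum_ite, Finset.sum_const, Finset.sum_const, filter_filter, filter_filter]
  have h1 : (univ.filter fun j => P j ∧ b j = 1) = (univ.filter fun j => b j = 1 ∧ P j) :=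
    filter_congr fun _ _ => and_comm
  have h2 : (univ.filter fun j => P j ∧ ¬ b j = 1) = (univ.filter fun j => b j = 0 ∧ P j) :=
    filter_congr fun x _ => by rcases fin2 (b x) with h | h <;> simp [h, and_comm]
  rw [h1, h2]
  push_cast
  ring

lemma val_split {n : ℕ} (b : Fin n → Fin 2) (i : Fin n) (c : Fin 2) (h : b i = c) :
    (univ.filter fun j => b j = c).card
      = (univ.filter fun j => b j = c ∧ j < i).card
        + (univ.filter fun j => b j = c ∧ i < j).card + 1 := by
  rw [card_split (fun j => b j = c) (fun j => j < i)]
  have : (univ.filter fun j => b j = c ∧ ¬ j < i)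
      = insert i (univ.filter fun j => b j = c ∧ i < j) := by
    ext j
    simp only [mem_filter, mem_univ, true_and, mem_insert, not_lt]
    constructor
    · rintro ⟨h1, h2⟩
      rcases eq_or_lt_of_le h2 with h3 | h3
      · exact Or.inl h3.symm
      · exact Or.inr ⟨h1, h3⟩
    · rintro (rfl | ⟨h1, h2⟩)
      · exact ⟨h, le_refl _⟩
      · exact ⟨h1, le_of_lt h2⟩
  rw [this, Finset.card_insert_of_notMem (by simp)]
  omega

lemma ones_zeros {n : ℕ} (b : Fin n → Fin 2) :
    ones b + (univ.filter fun j => b j = 0).card = n := by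
  have h := card_filter_add_card_filter_not (s := (univ : Finset (Fin n)))
    (p := fun j => b j = 1)
  have h2 : (univ.filter fun j => ¬ b j = 1) = (univ.filter fun j => b j = 0) :=
    filter_congr fun x _ => by rcases fin2 (b x) with h | h <;> simp [h]
  rw [h2, Finset.card_univ, Fintype.card_fin] at h
  rw [ones]
  omega

lemma wt_eq {n : ℕ} (b : Fin n → Fin 2) : wt b = 2 * (ones b : ℤ) - n := by
  simp only [wt, wtc]
  rw [Finset.sum_sub_distrib, Finset.sum_const, ← Finset.mul_sum]
  rw [Finset.sum_congr rfl (fun j _ => show ((b j : ℤ)) = if b j = 1 then 1 else 0 from by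
    rcases fin2 (b j) with h | h <;> simp [h])]
  rw [Finset.sum_boole, ones]
  simp [Finset.card_univ]

lemma Eexp {n : ℕ} (b : Fin n → Fin 2) (i : Fin n) (h : b i = 1) :
    -(∑ j ∈ univ.filter (fun j => i < j), wtc (b j)) + (binv (Function.update b i 0) : ℤ)
      = (binv b : ℤ) + 2 * ((univ.filter fun j => b j = 1 ∧ j < i).card : ℤ)
          - (ones b : ℤ) + 1 := by
  rw [wtc_split b (fun j => i < j), binv_update0 b i h, ones]
  have := val_split b i 1 h
  omega

lemma Fexp {n : ℕ} (b : Fin n → Fin 2) (i : Fin n) (h : b i = 0) :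
    (∑ j ∈ univ.filter (fun j => j < i), wtc (b j)) + (binv (Function.update b i 1) : ℤ)
      = (binv b : ℤ) + ((univ.filter fun j => b j = 0).card : ℤ) - 1
          - 2 * ((univ.filter fun j => b j = 0 ∧ j < i).card : ℤ) := by
  rw [wtc_split b (fun j => j < i), binv_update1 b i h]
  have := val_split b i 0 h
  omega

/-- Theorem: ι_n is a homomorphism of U_q(sl₂)-modules. -/
theorem iota_intertwiner (n : ℕ) (y : Virr n) :
    Eop (iota y) = iota (EV y) ∧ Fop (iota y) = iota (FV y) ∧ Kop (iota y) = iota (KV y) := by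
  refine ⟨?_, ?_, ?_⟩
  · -- E case
    funext b
    simp only [Eop, iota, EV]
    by_cases hk : ones b = 0
    · have hb : ∀ i : Fin n, ¬ b i = 1 := by
        intro i hi
        have hmem : i ∈ univ.filter (fun j => b j = 1) := mem_filter.mpr ⟨mem_univ i, hi⟩
        have : (univ.filter (fun j => b j = 1)) = ∅ := Finset.card_eq_zero.mp hk
        simp [this] at hmem
      simp [hb, hk]
    · have hpos : 0 < ones b := Nat.pos_of_ne_zero hk
      have hbd := ones_zeros b
      rw [dif_pos hpos, ← Finset.sum_filter]
      have hterm : ∀ i ∈ univ.filter (fun j => b j = 1),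
          q ^ (-∑ j ∈ Finset.filter (fun j => i < j) Finset.univ, wtc (b j)) *
            (q ^ binv (Function.update b i 0) *
              y ⟨ones (Function.update b i 0), by
                have := ones_zeros (Function.update b i 0); omega⟩)
          = q ^ ((binv b : ℤ)
                + 2 * ((((univ.filter fun j => b j = 1)).filter fun j => j < i).card : ℤ)
                - ((univ.filter fun j => b j = 1)).card + 1)
              * y ⟨ones b - 1, by omega⟩ := by
        intro i hi
        have hbi : b i = 1 := (mem_filter.mp hi).2
        have hones := ones_update0 b i hbi
        have hidx : (⟨ones (Function.update b i 0), by
              have := ones_zeros (Function.update b i 0); omega⟩ : Fin (n+1))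
            = (⟨ones b - 1, by omega⟩ : Fin (n+1)) := Fin.ext (by simp; omega)
        rw [hidx, ← zpow_natCast q (binv (Function.update b i 0)), ← mul_assoc,
          ← zpow_add₀ q_ne]
        congr 2
        rw [filter_filter]
        exact Eexp b i hbi
      rw [Finset.sum_congr rfl hterm, ← Finset.sum_mul,
        key_sum_E (univ.filter fun j => b j = 1) (binv b), zpow_natCast, mul_assoc]
      rfl
  · -- F case
    funext b
    simp only [Fop, iota, FV]
    have hbd := ones_zeros b
    by_cases hm : (univ.filter fun j => b j = 0).card = 0
    · have hb : ∀ i : Fin n, ¬ b i = 0 := by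
        intro i hi
        have hmem : i ∈ univ.filter (fun j => b j = 0) := mem_filter.mpr ⟨mem_univ i, hi⟩
        have : (univ.filter (fun j => b j = 0)) = ∅ := Finset.card_eq_zero.mp hm
        simp [this] at hmem
      have hlt : ¬ (ones b + 1 < n + 1) := by omega
      simp [hb, hlt]
    · have hlt : ones b + 1 < n + 1 := by omega
      rw [dif_pos hlt, ← Finset.sum_filter]
      have hterm : ∀ i ∈ univ.filter (fun j => b j = 0),
          q ^ (∑ j ∈ Finset.filter (fun j => j < i) Finset.univ, wtc (b j)) *
            (q ^ binv (Function.update b i 1) *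
              y ⟨ones (Function.update b i 1), by
                have := ones_zeros (Function.update b i 1); omega⟩)
          = q ^ ((binv b : ℤ) + ((univ.filter fun j => b j = 0)).card - 1
                - 2 * ((((univ.filter fun j => b j = 0)).filter fun j => j < i).card : ℤ))
              * y ⟨ones b + 1, hlt⟩ := by
        intro i hi
        have hbi : b i = 0 := (mem_filter.mp hi).2
        have hones := ones_update1 b i hbi
        have hidx : (⟨ones (Function.update b i 1), by
              have := ones_zeros (Function.update b i 1); omega⟩ : Fin (n+1))
            = (⟨ones b + 1, hlt⟩ : Fin (n+1)) := Fin.ext (by simp; omega)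
        rw [hidx, ← zpow_natCast q (binv (Function.update b i 1)), ← mul_assoc,
          ← zpow_add₀ q_ne]
        congr 2
        rw [filter_filter]
        exact Fexp b i hbi
      rw [Finset.sum_congr rfl hterm, ← Finset.sum_mul,
        key_sum_F (univ.filter fun j => b j = 0) (binv b), zpow_natCast, mul_assoc]
      congr 3
      omega
  · -- K case
    funext b
    simp only [Kop, iota, KV, wt_eq]
    ring_nf
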